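/- Let A be a finitary abelian category with enough projectives and m ≥ 1. The linear map χ : H(C_m(P)) → H(C^m(P)) defined on basis elements by χ([M_∘]) = [M_•] if the differential d_0 of M_∘ is zero (where M_• is the m-term complex M_1 → M_2 → ⋯ → M_m with M_m := M_0 and the remaining differentials of M_∘), and χ([M_∘]) = 0 otherwise, is a surjective homomorphism of algebras, inducing an algebra isomorphism H(C_m(P))/I ≅ H(C^m(P)), where I is the ideal spanned by classes of m-cyclic complexes with d_0 ≠ 0. -/

import Mathlib

open CategoryTheory CategoryTheory.Limits
open scoped Classical

noncomputable section

attribute [local instance] CategoryTheory.isIsomorphicSetoid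

universe v u

variable {C : Type u} [Category.{v} C] [Abelian C]

/-- `f`, `g` form a short exact sequence `0 ⟶ N ⟶ L ⟶ M ⟶ 0`. -/
def IsSES {N L M : C} (f : N ⟶ L) (g : L ⟶ M) : Prop :=
  ∃ w : f ≫ g = 0, (CategoryTheory.ShortComplex.mk f g w).ShortExact

/-- The set of short exact sequences `0 ⟶ N ⟶ L ⟶ M ⟶ 0` with fixed objects. -/
def ExtW (M N L : C) : Type _ :=
  {p : (N ⟶ L) × (L ⟶ M) // IsSES p.1 p.2}

/-- Equivalence of extensions of `M` by `N` with middle term `L`. -/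
def extRel (M N L : C) (p q : ExtW M N L) : Prop :=
  ∃ θ : L ≅ L, p.1.1 ≫ θ.hom = q.1.1 ∧ θ.hom ≫ q.1.2 = p.1.2

/-- `Ext¹(M,N)_L`: equivalence classes of extensions of `M` by `N` with middle term `L`. -/
def ExtClasses (M N L : C) := Quot (extRel M N L)

/-- The Hall structure constant `|Ext¹(M,N)_L| / |Hom(M,N)|`. -/
def hallCoeff (M N L : C) : ℚ :=
  (Nat.card (ExtClasses M N L) : ℚ) / (Nat.card (M ⟶ N) : ℚ)

/-- Isomorphism classes of objects. -/
abbrev IsoCls (D : Type*) [Category D] := Quotient (isIsomorphicSetoid D)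

variable (P : C → Prop)

/-- The full, extension-closed subcategory of objects satisfying `P`
(e.g. complexes of projectives). -/
abbrev SubCat := ObjectProperty.FullSubcategory P

/-- Hall structure constants of the exact subcategory, computed by ambient
short exact sequences. -/
def hallCoeffP (M N L : SubCat P) : ℚ := hallCoeff M.obj N.obj L.obj

/-- The underlying vector space of the Hall algebra of the subcategory. -/
abbrev HallAlgP := IsoCls (SubCat P) →₀ ℚ

/-- Finiteness assumptions making the Hall multiplication well defined. -/
class HallFinitaryP : Prop where
  homFinite : ∀ X Y : SubCat P, Finite (X.obj ⟶ Y.obj)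
  suppFinite : ∀ M N : SubCat P,
    {κ : IsoCls (SubCat P) | hallCoeffP P M N (Quotient.out κ) ≠ 0}.Finite

/-- The Hall product of two basis elements. -/
def hallMulBasisP [HallFinitaryP P] (M N : SubCat P) : HallAlgP P :=
  ⟨(HallFinitaryP.suppFinite M N).toFinset,
    fun κ => hallCoeffP P M N (Quotient.out κ), by
      intro κ
      simp [Set.Finite.mem_toFinset]⟩

/-- The multiplication of the Hall algebra of the subcategory. -/
def hallMulP [HallFinitaryP P] (x y : HallAlgP P) : HallAlgP P :=
  x.sum fun κ a => y.sum fun κ' b => (a * b) • hallMulBasisP P κ.out κ'.out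


open ZeroObject

variable (m : ℕ)

/-- The category of `m`-cyclic complexes over `C`. -/
abbrev CyclicCx := HomologicalComplex C (ComplexShape.up' (1 : ZMod m))

/-- `m`-cyclic complexes of projectives. -/
abbrev cyclicProj : CyclicCx (C := C) m → Prop := fun X => ∀ i, Projective (X.X i)

/-- `m`-term complexes of projectives: bounded complexes supported in degrees `1,…,m`,
with projective components. -/
abbrev termProj : CochainComplex C ℤ → Prop :=
  fun X => (∀ i : ℤ, (i < 1 ∨ (m : ℤ) < i) → IsZero (X.X i)) ∧ ∀ i, Projective (X.X i)

theorem projective_of_isZero {X : C} (h : IsZero X) : Projective X := by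
  constructor
  intro E Y f e he
  exact ⟨h.to_ E, h.eq_of_src _ _⟩

/-- The `m`-term complex `M_• = (M_1 → ⋯ → M_m)` associated to an `m`-cyclic complex
`M_∘` (forgetting the differential `d_0`), where `M_m := M_0`. -/
def toTerm (X : CyclicCx (C := C) m) : CochainComplex C ℤ where
  X i := if 1 ≤ i ∧ i ≤ (m : ℤ) then X.X (i : ZMod m) else 0
  d i j :=
    if h : 1 ≤ i ∧ i + 1 ≤ (m : ℤ) ∧ i + 1 = j then
      eqToHom (if_pos (show 1 ≤ i ∧ i ≤ (m : ℤ) by omega)) ≫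
        X.d (i : ZMod m) (j : ZMod m) ≫
        eqToHom (if_pos (show 1 ≤ j ∧ j ≤ (m : ℤ) by omega)).symm
    else 0
  shape i j hij := by
    simp only [ComplexShape.up_Rel] at hij ⊢
    rw [dif_neg (by tauto)]
  d_comp_d' i j k hij hjk := by
    simp only [ComplexShape.up_Rel] at hij hjk ⊢
    by_cases h1 : 1 ≤ i ∧ i + 1 ≤ (m : ℤ) ∧ i + 1 = j
    · by_cases h2 : 1 ≤ j ∧ j + 1 ≤ (m : ℤ) ∧ j + 1 = k
      · rw [dif_pos h1, dif_pos h2]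
        simp
      · rw [dif_neg h2, comp_zero]
    · rw [dif_neg h1, zero_comp]

lemma toTerm_mem (X : CyclicCx (C := C) m) (hX : cyclicProj m X) :
    termProj (C := C) m (toTerm m X) := by
  refine ⟨fun i hi => ?_, fun i => ?_⟩
  · dsimp [toTerm]
    rw [if_neg (by omega)]
    exact isZero_zero C
  · dsimp [toTerm]
    split_ifs with h
    · exact hX _
    · exact projective_of_isZero (isZero_zero C)

/-- The map `χ : H(C_m(P)) → H(C^m(P))`. -/
def chi (x : HallAlgP (cyclicProj (C := C) m)) : HallAlgP (termProj (C := C) m) :=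
  x.sum fun κ a =>
    if (Quotient.out κ).obj.d 0 1 = 0 then
      Finsupp.single ⟦(⟨toTerm m (Quotient.out κ).obj,
        toTerm_mem m _ (Quotient.out κ).property⟩ : SubCat (termProj (C := C) m))⟧ a
    else 0


/-!
Forgetting `d₀` identifies the `m`-cyclic complexes with `d₀ = 0` with the `m`-term complexes:
on them `toTerm` is fully faithful, it is essentially surjective onto `m`-term complexes, and it
preserves and reflects short exact sequences (these are checked degreewise, and every degree
mod `m` occurs among `1, …, m`), so it preserves Hall numbers. Moreover, if the middle term of a
short exact sequence of cyclic complexes has `d₀ = 0`, so do both ends. Hence `χ`, which is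
restriction of the basis to the classes with `d₀ = 0` followed by relabelling along `toTerm`, is
multiplicative; it is surjective with kernel spanned by the remaining basis vectors.
-/

namespace Finsupp

variable {α β M : Type*} (R : Type*) [Semiring R] [AddCommMonoid M] [Module R M]
  (S : Set α) (T : α → β)

def filterMapDomain : (α →₀ M) →ₗ[R] β →₀ M :=
  lmapDomain M R T ∘ₗ (supported M R S).subtype ∘ₗ restrictDom M R S

variable {R S T}

lemma filterMapDomain_apply (x : α →₀ M) :
    filterMapDomain R S T x = (x.filter (· ∈ S)).mapDomain T := rfl

lemma filterMapDomain_single (a : α) (b : M) :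
    filterMapDomain R S T (single a b) = if a ∈ S then single (T a) b else 0 := by
  rw [filterMapDomain_apply]
  split_ifs with ha
  · rw [filter_single_of_pos _ ha, mapDomain_single]
  · rw [filter_single_of_neg _ ha, mapDomain_zero]

lemma support_filter_subset (x : α →₀ M) : ((x.filter (· ∈ S)).support : Set α) ⊆ S :=
  fun a ha => by
    simp only [Finset.mem_coe, support_filter, Finset.mem_filter] at ha
    exact ha.2

lemma filterMapDomain_apply_image (hT : S.InjOn T) (x : α →₀ M) {a : α} (ha : a ∈ S) :
    filterMapDomain R S T x (T a) = x a := by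
  rw [filterMapDomain_apply, mapDomain_apply' S _ (support_filter_subset x) hT ha, filter_apply,
    if_pos ha]

lemma ker_filterMapDomain (hT : S.InjOn T) :
    LinearMap.ker (filterMapDomain (M := M) R S T) = supported M R Sᶜ := by
  ext x
  rw [LinearMap.mem_ker, filterMapDomain_apply, mem_supported', ← mapDomain_zero (f := T)]
  rw [(mapDomain_injOn S hT).eq_iff (support_filter_subset x) (by simp), Finsupp.ext_iff]
  simp only [filter_apply, zero_apply, Set.mem_compl_iff, not_not]
  exact forall_congr' fun a => by by_cases ha : a ∈ S <;> simp [ha]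

lemma filterMapDomain_surjective (hT : Set.SurjOn T S Set.univ) :
    Function.Surjective (filterMapDomain (M := M) R S T) := by
  intro y
  induction y using induction_linear with
  | zero => exact ⟨0, map_zero _⟩
  | add y z hy hz =>
    obtain ⟨x, rfl⟩ := hy
    obtain ⟨x', rfl⟩ := hz
    exact ⟨x + x', map_add _ _ _⟩
  | single b c =>
    obtain ⟨a, ha, rfl⟩ := hT (Set.mem_univ b)
    exact ⟨single a c, by rw [filterMapDomain_single, if_pos ha]⟩

end Finsupp

section HallAlgebra

variable {D E : Type*} [Category D] [Abelian D] [Category E] [Abelian E]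

def hallMulₗ (Q : D → Prop) [HallFinitaryP Q] :
    HallAlgP Q →ₗ[ℚ] HallAlgP Q →ₗ[ℚ] HallAlgP Q :=
  Finsupp.lsum ℚ fun κ => LinearMap.toSpanSingleton ℚ _ <|
    Finsupp.lsum ℚ fun κ' => LinearMap.toSpanSingleton ℚ _ (hallMulBasisP Q κ.out κ'.out)

variable {Q : D → Prop} [HallFinitaryP Q] {Q' : E → Prop} [HallFinitaryP Q']

lemma hallMulP_eq_hallMulₗ (x y : HallAlgP Q) : hallMulP Q x y = hallMulₗ Q x y := by
  rw [hallMulₗ, Finsupp.lsum_apply, LinearMap.finsupp_sum_apply]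
  refine Finsupp.sum_congr fun κ _ => ?_
  rw [LinearMap.toSpanSingleton_apply, LinearMap.smul_apply, Finsupp.lsum_apply,
    Finsupp.smul_sum]
  refine Finsupp.sum_congr fun κ' _ => ?_
  rw [LinearMap.toSpanSingleton_apply, smul_smul, mul_comm]

lemma hallMulₗ_single_one (κ κ' : IsoCls (SubCat Q)) :
    hallMulₗ Q (Finsupp.single κ 1) (Finsupp.single κ' 1) = hallMulBasisP Q κ.out κ'.out := by
  simp [hallMulₗ]

variable {S : Set (IsoCls (SubCat Q))} {T : IsoCls (SubCat Q) → IsoCls (SubCat Q')}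

theorem filterMapDomain_hallMulₗ (hinj : S.InjOn T) (hsurj : Set.SurjOn T S Set.univ)
    (hcoeff : ∀ κ ∈ S, ∀ κ' ∈ S, ∀ ν ∈ S,
      hallCoeffP Q κ.out κ'.out ν.out = hallCoeffP Q' (T κ).out (T κ').out (T ν).out)
    (hvanish : ∀ κ κ', ∀ ν ∈ S, ¬(κ ∈ S ∧ κ' ∈ S) →
      hallCoeffP Q κ.out κ'.out ν.out = 0)
    (x y : HallAlgP Q) :
    Finsupp.filterMapDomain ℚ S T (hallMulₗ Q x y) =
      hallMulₗ Q' (Finsupp.filterMapDomain ℚ S T x) (Finsupp.filterMapDomain ℚ S T y) := by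
  suffices h : (hallMulₗ Q).compr₂ (Finsupp.filterMapDomain ℚ S T) =
      ((hallMulₗ Q').comp (Finsupp.filterMapDomain ℚ S T)).compl₂
        (Finsupp.filterMapDomain ℚ S T) from
    LinearMap.congr_fun₂ h x y
  ext κ κ' : 4
  simp only [LinearMap.compr₂_apply, LinearMap.compl₂_apply, LinearMap.comp_apply,
    Finsupp.lsingle_apply, hallMulₗ_single_one, Finsupp.filterMapDomain_single]
  by_cases hκ : κ ∈ S ∧ κ' ∈ S
  · rw [if_pos hκ.1, if_pos hκ.2, hallMulₗ_single_one]
    ext μ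
    obtain ⟨ν, hν, rfl⟩ := hsurj (Set.mem_univ μ)
    rw [Finsupp.filterMapDomain_apply_image hinj _ hν]
    exact hcoeff κ hκ.1 κ' hκ.2 ν hν
  · have h0 : Finsupp.filterMapDomain ℚ S T (hallMulBasisP Q κ.out κ'.out) = 0 := by
      rw [Finsupp.filterMapDomain_apply, (Finsupp.filter_eq_zero_iff _ _).mpr,
        Finsupp.mapDomain_zero]
      exact fun ν hν => hvanish κ κ' ν hν hκ
    rcases not_and_or.mp hκ with h | h <;> simp [h, h0]

end HallAlgebra

section HallCoeff

variable {D E A : Type*} [Category D] [Abelian D] [Category E] [Abelian E] [Category A]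

lemma hallCoeff_eq_of_equiv {M N L : D} {M' N' L' : E} (e : ExtW M N L ≃ ExtW M' N' L')
    (he : ∀ p q, extRel M N L p q ↔ extRel M' N' L' (e p) (e q))
    (eHom : (M ⟶ N) ≃ (M' ⟶ N')) :
    hallCoeff M N L = hallCoeff M' N' L' := by
  have hExt : Nat.card (ExtClasses M N L) = Nat.card (ExtClasses M' N' L') :=
    Nat.card_congr (Quot.congr e he)
  rw [hallCoeff, hallCoeff, hExt, Nat.card_congr eHom]

lemma hallCoeff_eq_zero_of_isEmpty {M N L : D} [IsEmpty (ExtW M N L)] : hallCoeff M N L = 0 := by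
  have : IsEmpty (ExtClasses M N L) := ⟨Quot.ind (β := fun _ => False) isEmptyElim⟩
  simp [hallCoeff]

lemma IsSES.conj {N L M N' L' M' : D} (eN : N ≅ N') (eL : L ≅ L') (eM : M ≅ M')
    {f : N ⟶ L} {g : L ⟶ M} (h : IsSES f g) :
    IsSES (eN.inv ≫ f ≫ eL.hom) (eL.inv ≫ g ≫ eM.hom) := by
  obtain ⟨w, hS⟩ := h
  have w' : (eN.inv ≫ f ≫ eL.hom) ≫ (eL.inv ≫ g ≫ eM.hom) = 0 := by simp [reassoc_of% w]
  exact ⟨w', (ShortComplex.shortExact_iff_of_iso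
    (ShortComplex.isoMk eN eL eM (by simp) (by simp) : ShortComplex.mk f g w ≅ _)).mp hS⟩

def ExtW.congr {N L M N' L' M' : D} (eM : M ≅ M') (eN : N ≅ N') (eL : L ≅ L') :
    ExtW M N L ≃ ExtW M' N' L' where
  toFun p := ⟨(eN.inv ≫ p.1.1 ≫ eL.hom, eL.inv ≫ p.1.2 ≫ eM.hom), p.2.conj eN eL eM⟩
  invFun q := ⟨(eN.hom ≫ q.1.1 ≫ eL.inv, eL.hom ≫ q.1.2 ≫ eM.inv),
    q.2.conj eN.symm eL.symm eM.symm⟩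
  left_inv p := Subtype.ext (by simp)
  right_inv q := Subtype.ext (by simp)

@[simp] lemma ExtW.congr_apply {N L M N' L' M' : D} (eM : M ≅ M') (eN : N ≅ N') (eL : L ≅ L')
    (p : ExtW M N L) :
    (ExtW.congr eM eN eL p).1 = (eN.inv ≫ p.1.1 ≫ eL.hom, eL.inv ≫ p.1.2 ≫ eM.hom) := rfl

lemma ExtW.congr_symm {N L M N' L' M' : D} (eM : M ≅ M') (eN : N ≅ N') (eL : L ≅ L') :
    (ExtW.congr eM eN eL).symm = ExtW.congr eM.symm eN.symm eL.symm := rfl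

lemma extRel_congr {N L M N' L' M' : D} (eM : M ≅ M') (eN : N ≅ N') (eL : L ≅ L')
    {p q : ExtW M N L} (h : extRel M N L p q) :
    extRel M' N' L' (ExtW.congr eM eN eL p) (ExtW.congr eM eN eL q) := by
  obtain ⟨θ, h₁, h₂⟩ := h
  exact ⟨eL.symm ≪≫ θ ≪≫ eL, by simp [reassoc_of% h₁],
    by simp [reassoc_of% h₂]⟩

lemma hallCoeff_congr {N L M N' L' M' : D} (eM : M ≅ M') (eN : N ≅ N') (eL : L ≅ L') :
    hallCoeff M N L = hallCoeff M' N' L' := by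
  refine hallCoeff_eq_of_equiv (ExtW.congr eM eN eL)
    (fun p q => ⟨extRel_congr eM eN eL, fun h => ?_⟩) (Iso.homCongr eM eN)
  simpa only [← ExtW.congr_symm, Equiv.symm_apply_apply] using
    extRel_congr eM.symm eN.symm eL.symm h

lemma hallCoeffP_out_mk {Q : D → Prop} (M N L : SubCat Q) :
    hallCoeffP Q (⟦M⟧ : IsoCls (SubCat Q)).out (⟦N⟧ : IsoCls (SubCat Q)).out
      (⟦L⟧ : IsoCls (SubCat Q)).out = hallCoeffP Q M N L :=
  hallCoeff_congr ((ObjectProperty.ι Q).mapIso (Classical.choice (Quotient.mk_out M)))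
    ((ObjectProperty.ι Q).mapIso (Classical.choice (Quotient.mk_out N)))
    ((ObjectProperty.ι Q).mapIso (Classical.choice (Quotient.mk_out L)))

variable {F : A ⥤ D} {G : A ⥤ E}

def ExtW.mapEquiv (hF : F.FullyFaithful) (hG : G.FullyFaithful)
    (hSES : ∀ {X Y Z : A} (f : X ⟶ Y) (g : Y ⟶ Z),
      IsSES (F.map f) (F.map g) ↔ IsSES (G.map f) (G.map g)) (M N L : A) :
    ExtW (F.obj M) (F.obj N) (F.obj L) ≃ ExtW (G.obj M) (G.obj N) (G.obj L) :=
  Equiv.subtypeEquiv ((hF.homEquiv.symm.trans hG.homEquiv).prodCongr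
    (hF.homEquiv.symm.trans hG.homEquiv)) fun p => by
      simpa using hSES (hF.preimage p.1) (hF.preimage p.2)

@[simp] lemma ExtW.mapEquiv_apply (hF : F.FullyFaithful) (hG : G.FullyFaithful)
    (hSES : ∀ {X Y Z : A} (f : X ⟶ Y) (g : Y ⟶ Z),
      IsSES (F.map f) (F.map g) ↔ IsSES (G.map f) (G.map g)) {M N L : A}
    (p : ExtW (F.obj M) (F.obj N) (F.obj L)) :
    (ExtW.mapEquiv hF hG hSES M N L p).1 = (G.map (hF.preimage p.1.1), G.map (hF.preimage p.1.2)) :=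
  rfl

lemma hallCoeff_map_eq (hF : F.FullyFaithful) (hG : G.FullyFaithful)
    (hSES : ∀ {X Y Z : A} (f : X ⟶ Y) (g : Y ⟶ Z),
      IsSES (F.map f) (F.map g) ↔ IsSES (G.map f) (G.map g)) (M N L : A) :
    hallCoeff (F.obj M) (F.obj N) (F.obj L) = hallCoeff (G.obj M) (G.obj N) (G.obj L) := by
  refine hallCoeff_eq_of_equiv (ExtW.mapEquiv hF hG hSES M N L) (fun p q => ⟨?_, ?_⟩)
    (hF.homEquiv.symm.trans hG.homEquiv)
  · rintro ⟨θ, h₁, h₂⟩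
    refine ⟨G.mapIso (hF.preimageIso θ), ?_, ?_⟩
    · rw [ExtW.mapEquiv_apply, ExtW.mapEquiv_apply, Functor.mapIso_hom,
        Functor.FullyFaithful.preimageIso_hom, ← G.map_comp, ← hF.preimage_comp, h₁]
    · rw [ExtW.mapEquiv_apply, ExtW.mapEquiv_apply, Functor.mapIso_hom,
        Functor.FullyFaithful.preimageIso_hom, ← G.map_comp, ← hF.preimage_comp, h₂]
  · rintro ⟨θ, h₁, h₂⟩
    simp only [ExtW.mapEquiv_apply] at h₁ h₂
    refine ⟨F.mapIso (hG.preimageIso θ), ?_, ?_⟩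
    · rw [← hF.map_preimage p.1.1, ← hF.map_preimage q.1.1, Functor.mapIso_hom, ← F.map_comp]
      exact congrArg F.map (hG.map_injective (by simpa using h₁))
    · rw [← hF.map_preimage p.1.2, ← hF.map_preimage q.1.2, Functor.mapIso_hom, ← F.map_comp]
      exact congrArg F.map (hG.map_injective (by simpa using h₂))

end HallCoeff

section HomologicalComplex

variable {V ι : Type*} [Category V] [HasZeroMorphisms V] {c : ComplexShape ι}

lemma ShortComplex.shortExact_of_isZero (S : ShortComplex V) (h₁ : IsZero S.X₁)
    (h₂ : IsZero S.X₂) (h₃ : IsZero S.X₃) : S.ShortExact where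
  exact := S.exact_of_isZero_X₂ h₂
  mono_f := ⟨fun _ _ _ => h₁.eq_of_tgt _ _⟩
  epi_g := ⟨fun _ _ _ => h₃.eq_of_src _ _⟩

lemma HomologicalComplex.d_eq_eqToHom_comp (K : HomologicalComplex V c) {a a' b b' : ι}
    (ha : a = a') (hb : b = b') :
    K.d a b = eqToHom (congrArg K.X ha) ≫ K.d a' b' ≫ eqToHom (congrArg K.X hb).symm := by
  subst ha hb
  simp

lemma HomologicalComplex.Hom.eqToHom_comp_f_comp_eqToHom {K L : HomologicalComplex V c}
    (φ : K ⟶ L) {k i : ι} (h : k = i) {A B : V} (p : A = K.X k) (q : L.X k = B) :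
    eqToHom p ≫ φ.f k ≫ eqToHom q = eqToHom (p.trans (congrArg K.X h)) ≫ φ.f i ≫
      eqToHom ((congrArg L.X h).symm.trans q) := by
  subst h
  simp

end HomologicalComplex

section LiftIdx

/-- The representative of `j` in `{1, …, m}`; the class `0` is represented by `m`, matching
`M_m := M_0`. -/
def liftIdx (j : ZMod m) : ℤ := ((j - 1).val : ℤ) + 1

variable [NeZero m]

lemma liftIdx_mem (j : ZMod m) : 1 ≤ liftIdx m j ∧ liftIdx m j ≤ m := by
  have := ZMod.val_lt (j - 1)
  constructor <;> unfold liftIdx <;> omega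

@[simp] lemma intCast_liftIdx (j : ZMod m) : ((liftIdx m j : ℤ) : ZMod m) = j := by
  simp [liftIdx]

lemma liftIdx_intCast {i : ℤ} (hi : 1 ≤ i ∧ i ≤ m) : liftIdx m (i : ZMod m) = i := by
  have hval : (((i : ZMod m) - 1).val : ℤ) = i - 1 := by
    rw [show (i : ZMod m) - 1 = ((i - 1 : ℤ) : ZMod m) by push_cast; ring, ZMod.val_intCast,
      Int.emod_eq_of_lt (by omega) (by omega)]
  rw [liftIdx, hval]
  omega

lemma exists_intCast_eq (j : ZMod m) : ∃ i : ℤ, (1 ≤ i ∧ i ≤ m) ∧ (i : ZMod m) = j :=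
  ⟨liftIdx m j, liftIdx_mem m j, intCast_liftIdx m j⟩

lemma intCast_ne_zero_of_lt {i : ℤ} (h₁ : 1 ≤ i) (h₂ : i < m) : (i : ZMod m) ≠ 0 := by
  intro h
  have hm : liftIdx m ((m : ℤ) : ZMod m) = m :=
    liftIdx_intCast m ⟨by have := NeZero.ne m; omega, le_rfl⟩
  have hi := liftIdx_intCast m ⟨h₁, h₂.le⟩
  rw [h] at hi
  simp only [Int.cast_natCast, ZMod.natCast_self] at hm
  omega

end LiftIdx

section ToTerm

lemma toTerm_X {M : CyclicCx (C := C) m} {i : ℤ} (hi : 1 ≤ i ∧ i ≤ m) :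
    (toTerm m M).X i = M.X (i : ZMod m) := if_pos hi

lemma isZero_toTerm_X (M : CyclicCx (C := C) m) {i : ℤ} (hi : ¬(1 ≤ i ∧ i ≤ m)) :
    IsZero ((toTerm m M).X i) := by
  rw [show (toTerm m M).X i = 0 from if_neg hi]
  exact isZero_zero C

lemma toTerm_d (M : CyclicCx (C := C) m) {i : ℤ} (h₁ : 1 ≤ i) (h₂ : i + 1 ≤ m) :
    (toTerm m M).d i (i + 1) = eqToHom (toTerm_X m ⟨h₁, by omega⟩) ≫
      M.d (i : ZMod m) ((i + 1 : ℤ) : ZMod m) ≫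
        eqToHom (toTerm_X m ⟨by omega, h₂⟩).symm :=
  dif_pos ⟨h₁, h₂, rfl⟩

def toTermFunctor : CyclicCx (C := C) m ⥤ CochainComplex C ℤ where
  obj := toTerm m
  map {M N} f :=
    { f i := if h : 1 ≤ i ∧ i ≤ m then
        eqToHom (toTerm_X m h) ≫ f.f (i : ZMod m) ≫ eqToHom (toTerm_X m h).symm else 0
      comm' i j hij := by
        obtain rfl : i + 1 = j := hij
        by_cases h : 1 ≤ i ∧ i + 1 ≤ m
        · rw [dif_pos ⟨h.1, by omega⟩, dif_pos ⟨by omega, h.2⟩, toTerm_d m M h.1 h.2,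
            toTerm_d m N h.1 h.2]
          simp
        · rw [show (toTerm m M).d i (i + 1) = 0 from dif_neg (by omega),
            show (toTerm m N).d i (i + 1) = 0 from dif_neg (by omega), comp_zero, zero_comp] }
  map_id M := by
    ext i
    by_cases h : 1 ≤ i ∧ i ≤ m
    · simp [dif_pos h]
    · exact (isZero_toTerm_X m M h).eq_of_src _ _
  map_comp {M N K} f g := by
    ext i
    by_cases h : 1 ≤ i ∧ i ≤ m
    · simp [dif_pos h]
    · exact (isZero_toTerm_X m M h).eq_of_src _ _

lemma toTermFunctor_obj_X (M : CyclicCx (C := C) m) {i : ℤ} (hi : 1 ≤ i ∧ i ≤ m) :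
    ((toTermFunctor m).obj M).X i = M.X (i : ZMod m) :=
  toTerm_X m hi

lemma toTermFunctor_obj_d (M : CyclicCx (C := C) m) {i : ℤ} (h₁ : 1 ≤ i)
    (h₂ : i + 1 ≤ m) :
    ((toTermFunctor m).obj M).d i (i + 1) =
      eqToHom (toTermFunctor_obj_X m M ⟨h₁, by omega⟩) ≫
        M.d (i : ZMod m) ((i + 1 : ℤ) : ZMod m) ≫
        eqToHom (toTermFunctor_obj_X m M ⟨by omega, h₂⟩).symm :=
  toTerm_d m M h₁ h₂

lemma toTermFunctor_map_f {M N : CyclicCx (C := C) m} (f : M ⟶ N) {i : ℤ}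
    (hi : 1 ≤ i ∧ i ≤ m) :
    ((toTermFunctor m).map f).f i = eqToHom (toTermFunctor_obj_X m M hi) ≫ f.f (i : ZMod m) ≫
      eqToHom (toTermFunctor_obj_X m N hi).symm :=
  dif_pos hi

instance : (toTermFunctor (C := C) m).PreservesZeroMorphisms where
  map_zero M N := by
    ext i
    by_cases h : 1 ≤ i ∧ i ≤ m
    · rw [toTermFunctor_map_f m _ h, HomologicalComplex.zero_f, zero_comp, comp_zero]
      rfl
    · exact (isZero_toTerm_X m M h).eq_of_src _ _

end ToTerm

section FullyFaithful

def d0Zero : ObjectProperty (CyclicCx (C := C) m) := fun M => M.d 0 1 = 0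

variable [NeZero m]

instance : (toTermFunctor (C := C) m).Faithful where
  map_injective {M N f g} h := by
    ext j
    obtain ⟨i, hi, rfl⟩ := exists_intCast_eq m j
    have hi' := HomologicalComplex.congr_hom h i
    rw [toTermFunctor_map_f m _ hi, toTermFunctor_map_f m _ hi] at hi'
    exact (cancel_mono _).1 ((cancel_epi _).1 hi')

lemma toTermFunctor_obj_X_liftIdx (M : CyclicCx (C := C) m) (j : ZMod m) :
    ((toTermFunctor m).obj M).X (liftIdx m j) = M.X j := by
  rw [toTermFunctor_obj_X m M (liftIdx_mem m j), intCast_liftIdx]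

def ofTermMap {M N : CyclicCx (C := C) m} (hM : M.d 0 1 = 0) (hN : N.d 0 1 = 0)
    (φ : (toTermFunctor m).obj M ⟶ (toTermFunctor m).obj N) : M ⟶ N where
  f j := eqToHom (toTermFunctor_obj_X_liftIdx m M j).symm ≫ φ.f (liftIdx m j) ≫
    eqToHom (toTermFunctor_obj_X_liftIdx m N j)
  comm' j k hjk := by
    obtain rfl : j + 1 = k := hjk
    by_cases hj : j = 0
    · subst hj
      rw [zero_add, hM, hN, comp_zero, zero_comp]
    obtain ⟨i, hi, rfl⟩ := exists_intCast_eq m j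
    have hlt : i < m := hi.2.lt_of_ne fun h => hj (by simp [h])
    have hi₁ : 1 ≤ i + 1 ∧ i + 1 ≤ m := ⟨by omega, hlt⟩
    rw [show (i : ZMod m) + 1 = ((i + 1 : ℤ) : ZMod m) by push_cast; rfl,
      φ.eqToHom_comp_f_comp_eqToHom (liftIdx_intCast m hi),
      φ.eqToHom_comp_f_comp_eqToHom (liftIdx_intCast m hi₁)]
    have hc := φ.comm i (i + 1)
    rw [toTermFunctor_obj_d m M hi.1 hlt, toTermFunctor_obj_d m N hi.1 hlt] at hc
    simpa using eqToHom (toTermFunctor_obj_X m M hi).symm ≫= hc =≫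
      eqToHom (toTermFunctor_obj_X m N hi₁)

lemma toTermFunctor_map_ofTermMap {M N : CyclicCx (C := C) m} (hM : M.d 0 1 = 0)
    (hN : N.d 0 1 = 0) (φ : (toTermFunctor m).obj M ⟶ (toTermFunctor m).obj N) :
    (toTermFunctor m).map (ofTermMap m hM hN φ) = φ := by
  ext i
  by_cases hi : 1 ≤ i ∧ i ≤ m
  · rw [toTermFunctor_map_f m _ hi]
    simp [ofTermMap, φ.eqToHom_comp_f_comp_eqToHom (liftIdx_intCast m hi)]
  · exact (isZero_toTerm_X m M hi).eq_of_src _ _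

def toTermFullyFaithful : ((d0Zero (C := C) m).ι ⋙ toTermFunctor m).FullyFaithful where
  preimage {M N} φ := ObjectProperty.homMk (ofTermMap m M.property N.property φ)
  map_preimage {M N} φ := toTermFunctor_map_ofTermMap m M.property N.property φ
  preimage_map {M N} _ := ((d0Zero m).ι ⋙ toTermFunctor m).map_injective
    (toTermFunctor_map_ofTermMap m M.property N.property _)

end FullyFaithful

section ShortExact

def toTermFunctorCompEvalIso {i : ℤ} (hi : 1 ≤ i ∧ i ≤ m) :
    toTermFunctor m ⋙ HomologicalComplex.eval C _ i ≅
      HomologicalComplex.eval C (ComplexShape.up' (1 : ZMod m)) (i : ZMod m) :=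
  NatIso.ofComponents (fun M => eqToIso (toTermFunctor_obj_X m M hi)) fun {M N} f => by
    change ((toTermFunctor m).map f).f i ≫ eqToHom (toTermFunctor_obj_X m N hi) =
      eqToHom (toTermFunctor_obj_X m M hi) ≫ f.f (i : ZMod m)
    simp [toTermFunctor_map_f m f hi]

variable [NeZero m]

lemma shortExact_map_toTermFunctor_iff (S : ShortComplex (CyclicCx (C := C) m)) :
    (S.map (toTermFunctor m)).ShortExact ↔ S.ShortExact := by
  simp only [HomologicalComplex.shortExact_iff_degreewise_shortExact]
  have key : ∀ i : ℤ, (hi : 1 ≤ i ∧ i ≤ m) →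
      (((S.map (toTermFunctor m)).map (HomologicalComplex.eval _ _ i)).ShortExact ↔
        (S.map (HomologicalComplex.eval _ _ (i : ZMod m))).ShortExact) := fun i hi =>
    ShortComplex.shortExact_iff_of_iso (S.mapNatIso (toTermFunctorCompEvalIso m hi))
  refine ⟨fun h j => ?_, fun h i => ?_⟩
  · obtain ⟨i, hi, rfl⟩ := exists_intCast_eq m j
    exact (key i hi).1 (h i)
  · by_cases hi : 1 ≤ i ∧ i ≤ m
    · exact (key i hi).2 (h i)
    · exact ShortComplex.shortExact_of_isZero _ (isZero_toTerm_X m _ hi)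
        (isZero_toTerm_X m _ hi) (isZero_toTerm_X m _ hi)

lemma isSES_map_toTermFunctor_iff {N L M : CyclicCx (C := C) m} (f : N ⟶ L) (g : L ⟶ M) :
    IsSES ((toTermFunctor m).map f) ((toTermFunctor m).map g) ↔ IsSES f g := by
  constructor
  · rintro ⟨w', h⟩
    have w : f ≫ g = 0 :=
      (toTermFunctor m).map_injective (by rw [Functor.map_comp, w', Functor.map_zero])
    exact ⟨w, (shortExact_map_toTermFunctor_iff m (ShortComplex.mk f g w)).1 h⟩
  · rintro ⟨w, h⟩
    exact ⟨by rw [← Functor.map_comp, w, Functor.map_zero],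
      (shortExact_map_toTermFunctor_iff m (ShortComplex.mk f g w)).2 h⟩

end ShortExact

section OfTerm

variable [NeZero m]

def ofTerm (X : CochainComplex C ℤ) : CyclicCx (C := C) m where
  X j := X.X (liftIdx m j)
  d j k := if j = 0 then 0 else X.d (liftIdx m j) (liftIdx m k)
  shape j k hjk := by
    split_ifs
    · rfl
    · refine X.shape _ _ fun h => hjk ?_
      simpa using congrArg (Int.cast : ℤ → ZMod m) h
  d_comp_d' j k l _ _ := by
    split_ifs <;> simp

lemma ofTerm_d_zero (X : CochainComplex C ℤ) : (ofTerm m X).d 0 1 = 0 := if_pos rfl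

lemma ofTerm_X (X : CochainComplex C ℤ) (j : ZMod m) : (ofTerm m X).X j = X.X (liftIdx m j) := rfl

lemma ofTerm_d (X : CochainComplex C ℤ) {j : ZMod m} (hj : j ≠ 0) (k : ZMod m) :
    (ofTerm m X).d j k = eqToHom (ofTerm_X m X j) ≫ X.d (liftIdx m j) (liftIdx m k) ≫
      eqToHom (ofTerm_X m X k).symm := by
  change _ = eqToHom rfl ≫ X.d (liftIdx m j) (liftIdx m k) ≫ eqToHom rfl
  simp [ofTerm, hj]

def toTermOfTermIso (X : CochainComplex C ℤ)
    (hX : ∀ i : ℤ, (i < 1 ∨ (m : ℤ) < i) → IsZero (X.X i)) :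
    toTerm m (ofTerm m X) ≅ X :=
  HomologicalComplex.Hom.isoOfComponents
    (fun i => if hi : 1 ≤ i ∧ i ≤ m then
        eqToIso ((toTerm_X m hi).trans (congrArg X.X (liftIdx_intCast m hi)))
      else (isZero_toTerm_X m _ hi).iso (hX i (by omega)))
    (fun i j hij => by
      obtain rfl : i + 1 = j := hij
      by_cases h₁ : 1 ≤ i
      swap
      · exact (isZero_toTerm_X m _ (by omega)).eq_of_src _ _
      by_cases h₂ : i + 1 ≤ m
      swap
      · exact (hX _ (by omega)).eq_of_tgt _ _
      have hi : 1 ≤ i ∧ i ≤ m := ⟨h₁, by omega⟩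
      have hi₁ : 1 ≤ i + 1 ∧ i + 1 ≤ m := ⟨by omega, h₂⟩
      rw [dif_pos hi, dif_pos hi₁, toTerm_d m _ h₁ h₂,
        ofTerm_d m X (intCast_ne_zero_of_lt m h₁ (by omega)),
        X.d_eq_eqToHom_comp (liftIdx_intCast m hi) (liftIdx_intCast m hi₁)]
      simp)

end OfTerm

section D0Zero

variable {m}

lemma d0_eq_zero_of_iso {M N : CyclicCx (C := C) m} (e : M ≅ N) (hM : M.d 0 1 = 0) :
    N.d 0 1 = 0 := by
  rw [← cancel_epi (e.hom.f 0), e.hom.comm, hM, zero_comp, comp_zero]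

lemma IsSES.d0_eq_zero {N L M : CyclicCx (C := C) m} {f : N ⟶ L} {g : L ⟶ M} (h : IsSES f g)
    (hL : L.d 0 1 = 0) : M.d 0 1 = 0 ∧ N.d 0 1 = 0 := by
  obtain ⟨w, hS⟩ := h
  have hdeg := (HomologicalComplex.shortExact_iff_degreewise_shortExact _).mp hS
  have : Epi (g.f 0) := (hdeg 0).epi_g
  have : Mono (f.f 1) := (hdeg 1).mono_f
  constructor
  · rw [← cancel_epi (g.f 0), g.comm, hL, zero_comp, comp_zero]
  · rw [← cancel_mono (f.f 1), ← f.comm, hL, comp_zero, zero_comp]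

end D0Zero

section Classes

def d0ZeroClasses : Set (IsoCls (SubCat (cyclicProj (C := C) m))) :=
  {κ | κ.out.obj.d 0 1 = 0}

def toTermClass (κ : IsoCls (SubCat (cyclicProj (C := C) m))) :
    IsoCls (SubCat (termProj (C := C) m)) :=
  ⟦⟨toTerm m κ.out.obj, toTerm_mem m _ κ.out.property⟩⟧

lemma chi_eq_filterMapDomain (x : HallAlgP (cyclicProj (C := C) m)) :
    chi m x = Finsupp.filterMapDomain ℚ (d0ZeroClasses m) (toTermClass m) x := by
  conv_rhs => rw [← x.sum_single]
  rw [map_finsuppSum]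
  exact Finsupp.sum_congr fun κ _ =>
    (Finsupp.filterMapDomain_single (S := d0ZeroClasses m) (T := toTermClass m) κ (x κ)).symm

lemma hallCoeffP_eq_zero_of_d0_ne_zero
    {κ κ' ν : IsoCls (SubCat (cyclicProj (C := C) m))} (hν : ν ∈ d0ZeroClasses m)
    (h : ¬(κ ∈ d0ZeroClasses m ∧ κ' ∈ d0ZeroClasses m)) :
    hallCoeffP (cyclicProj m) κ.out κ'.out ν.out = 0 :=
  have : IsEmpty (ExtW κ.out.obj κ'.out.obj ν.out.obj) := ⟨fun p => h (p.2.d0_eq_zero hν)⟩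
  hallCoeff_eq_zero_of_isEmpty

variable [NeZero m]

lemma toTermClass_injOn : (d0ZeroClasses (C := C) m).InjOn (toTermClass m) := by
  intro κ hκ κ' hκ' h
  obtain ⟨e⟩ := Quotient.exact h
  let e' : (⟨κ.out.obj, hκ⟩ : (d0Zero m).FullSubcategory) ≅ ⟨κ'.out.obj, hκ'⟩ :=
    (toTermFullyFaithful m).preimageIso ((ObjectProperty.ι _).mapIso e)
  exact Quotient.out_equiv_out.mp ⟨ObjectProperty.isoMk _ ((d0Zero m).ι.mapIso e')⟩

lemma toTermClass_surjOn : Set.SurjOn (toTermClass (C := C) m) (d0ZeroClasses m) Set.univ := by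
  intro μ _
  let X : SubCat (cyclicProj (C := C) m) := ⟨ofTerm m μ.out.obj, fun _ => μ.out.property.2 _⟩
  have e : (⟦X⟧ : IsoCls _).out.obj ≅ X.obj :=
    (ObjectProperty.ι _).mapIso (Classical.choice (Quotient.mk_out X))
  refine ⟨⟦X⟧, d0_eq_zero_of_iso e.symm (ofTerm_d_zero m _), ?_⟩
  have e₂ : toTerm m (⟦X⟧ : IsoCls _).out.obj ≅ μ.out.obj :=
    (toTermFunctor m).mapIso e ≪≫ toTermOfTermIso m _ μ.out.property.1
  rw [← Quotient.out_eq μ]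
  exact Quotient.sound ⟨ObjectProperty.isoMk _ e₂⟩

lemma hallCoeffP_toTermClass {κ κ' ν : IsoCls (SubCat (cyclicProj (C := C) m))}
    (hκ : κ ∈ d0ZeroClasses m) (hκ' : κ' ∈ d0ZeroClasses m) (hν : ν ∈ d0ZeroClasses m) :
    hallCoeffP (cyclicProj m) κ.out κ'.out ν.out = hallCoeffP (termProj m)
      (toTermClass m κ).out (toTermClass m κ').out (toTermClass m ν).out := by
  simp only [toTermClass, hallCoeffP_out_mk]
  exact hallCoeff_map_eq (d0Zero m).fullyFaithfulι (toTermFullyFaithful m)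
    (fun f g => (isSES_map_toTermFunctor_iff m f.hom g.hom).symm)
    (⟨κ.out.obj, hκ⟩ : (d0Zero m).FullSubcategory) ⟨κ'.out.obj, hκ'⟩
    ⟨ν.out.obj, hν⟩

end Classes

/-- **`χ` is a surjective algebra homomorphism, with kernel the ideal `I` spanned by the
classes of `m`-cyclic complexes with `d₀ ≠ 0`; hence it induces an algebra isomorphism
`H(C_m(P))/I ≅ H(C^m(P))`.** -/
theorem chi_surjective_algHom (hm : 1 ≤ m)
    [HallFinitaryP (cyclicProj (C := C) m)] [HallFinitaryP (termProj (C := C) m)] :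
    IsLinearMap ℚ (chi (C := C) m) ∧
    (∀ x y, chi m (hallMulP (cyclicProj (C := C) m) x y) =
      hallMulP (termProj (C := C) m) (chi m x) (chi m y)) ∧
    Function.Surjective (chi (C := C) m) ∧
    (∀ x, chi m x = 0 ↔ x ∈ Submodule.span ℚ
      {v : HallAlgP (cyclicProj (C := C) m) |
        ∃ κ : IsoCls (SubCat (cyclicProj (C := C) m)),
          (Quotient.out κ).obj.d 0 1 ≠ 0 ∧ v = Finsupp.single κ (1 : ℚ)}) := by
  have : NeZero m := ⟨by omega⟩
  have hchi : chi (C := C) m = Finsupp.filterMapDomain ℚ (d0ZeroClasses m) (toTermClass m) :=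
    funext (chi_eq_filterMapDomain m)
  have hI : {v : HallAlgP (cyclicProj (C := C) m) |
      ∃ κ : IsoCls (SubCat (cyclicProj (C := C) m)),
        (Quotient.out κ).obj.d 0 1 ≠ 0 ∧ v = Finsupp.single κ (1 : ℚ)} =
      (Finsupp.single · 1) '' (d0ZeroClasses m)ᶜ := by
    ext v
    exact exists_congr fun κ => and_congr_right fun _ => eq_comm
  rw [hchi, hI]
  refine ⟨LinearMap.isLinear _, fun x y => ?_,
    Finsupp.filterMapDomain_surjective (toTermClass_surjOn m), fun x => ?_⟩
  · simp only [hallMulP_eq_hallMulₗ]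
    exact filterMapDomain_hallMulₗ (toTermClass_injOn m) (toTermClass_surjOn m)
      (fun _ hκ _ hκ' _ hν => hallCoeffP_toTermClass m hκ hκ' hν)
      (fun _ _ _ => hallCoeffP_eq_zero_of_d0_ne_zero m) x y
  · rw [← LinearMap.mem_ker, Finsupp.ker_filterMapDomain (toTermClass_injOn m),
      Finsupp.supported_eq_span_single]

end
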